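/- Let H be a separable Hilbert space and fix 0 ≤ T' < T. For every y ∈ L²([0,T]; H), T^ε(y) → 0 in L²([0,T]; H) as ε → 0⁺, i.e. lim_{ε→0⁺} ∫_0^T ‖T^ε(y)_s‖²_H ds = 0. -/

import Mathlib

/-!
Extend `y` by zero outside `[0, T]` to `z ∈ L²(ℝ)`. For `0 < ε ≤ T - T'` the functions `y` and `z`
agree wherever `T^ε(y)` reads them, and `T^ε(y)_s` is `ε⁻¹` times the integral of
`t ↦ z (t + ε) - z t` over a subinterval of `(s - ε, s]`. Cauchy–Schwarz on each such interval and
Tonelli (each `t` lies in `(s - ε, s]` for a set of `s` of measure `ε`) give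
`‖T^ε(y)‖²_{L²} ≤ ‖z (· + ε) - z‖²_{L²(ℝ)}`, which tends to `0` by continuity of translation in `L²`.
-/

open MeasureTheory Filter Set
open scoped ENNReal Topology

section

variable {α E : Type*} [MeasurableSpace α] {μ : Measure α} [NormedAddCommGroup E]

theorem MeasureTheory.eLpNorm_two_sq_eq_lintegral (f : α → E) :
    eLpNorm f 2 μ ^ 2 = ∫⁻ x, ‖f x‖ₑ ^ 2 ∂μ := by
  simpa using eLpNorm_nnreal_pow_eq_lintegral (μ := μ) (f := f) (p := 2) two_ne_zero

theorem MeasureTheory.enorm_integral_sq_le [NormedSpace ℝ E] {f : α → E}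
    (hf : AEStronglyMeasurable f μ) :
    ‖∫ x, f x ∂μ‖ₑ ^ 2 ≤ μ univ * ∫⁻ x, ‖f x‖ₑ ^ 2 ∂μ := by
  calc ‖∫ x, f x ∂μ‖ₑ ^ 2 ≤ eLpNorm f 1 μ ^ 2 := by
        rw [eLpNorm_one_eq_lintegral_enorm]
        gcongr
        exact enorm_integral_le_lintegral_enorm f
    _ ≤ (eLpNorm f 2 μ * μ univ ^ (1 / 2 : ℝ)) ^ 2 := by
        gcongr
        convert eLpNorm_le_eLpNorm_mul_rpow_measure_univ one_le_two hf using 3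
        norm_num
    _ = μ univ * ∫⁻ x, ‖f x‖ₑ ^ 2 ∂μ := by
        rw [mul_pow, eLpNorm_two_sq_eq_lintegral, ← ENNReal.rpow_natCast, ← ENNReal.rpow_mul]
        norm_num [mul_comm]

end

section

variable {G E : Type*} [TopologicalSpace G] [AddGroup G] [IsTopologicalAddGroup G]
  [MeasurableSpace G] [BorelSpace G] {μ : Measure G} [IsLocallyFiniteMeasure μ]
  [μ.InnerRegularCompactLTTop] [μ.IsAddRightInvariant] [NormedAddCommGroup E]

theorem MeasureTheory.MemLp.tendsto_eLpNorm_comp_add_right_sub {p : ℝ≥0∞} [Fact (1 ≤ p)]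
    (hp : p ≠ ∞) {f : G → E} (hf : MemLp f p μ) :
    Tendsto (fun a => eLpNorm (fun x => f (x + a) - f x) p μ) (𝓝 0) (𝓝 0) := by
  let τ : C(G, C(G, G)) := ContinuousMap.curry ⟨fun p : G × G => p.2 + p.1, by fun_prop⟩
  have hτ (a : G) : MeasurePreserving (τ a) μ μ := measurePreserving_add_right μ a
  have hτ₀ : τ 0 = ContinuousMap.id G := by ext; simp [τ]
  have hlim := (tendsto_const_nhds (x := hf.toLp f)).compMeasurePreservingLp
    (hτ₀ ▸ τ.continuous.tendsto 0) hτ (.id μ) hp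
  exact (Lp.tendsto_Lp_iff_tendsto_eLpNorm'' _ (fun a => hf.comp_measurePreserving (hτ a)) f hf).1
    hlim

end

theorem lintegral_setLIntegral_Ioc_sub {g : ℝ → ℝ≥0∞} (hg : AEMeasurable g) (ε : ℝ) :
    ∫⁻ s, ∫⁻ t in Ioc (s - ε) s, g t = ENNReal.ofReal ε * ∫⁻ t, g t := by
  set A : Set (ℝ × ℝ) := {p | p.1 - ε < p.2 ∧ p.2 ≤ p.1}
  have hA : MeasurableSet A :=
    (measurableSet_lt (by fun_prop) measurable_snd).inter
      (measurableSet_le measurable_snd measurable_fst)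
  have hslice (t : ℝ) : {s | (s, t) ∈ A} = Ico t (t + ε) := by
    ext s
    simp only [A, mem_ofPred_eq, mem_Ico]
    constructor <;> intro h <;> constructor <;> linarith [h.1, h.2]
  calc ∫⁻ s, ∫⁻ t in Ioc (s - ε) s, g t
      = ∫⁻ s, ∫⁻ t, A.indicator (fun p => g p.2) (s, t) := by
        refine lintegral_congr fun s => ?_
        rw [← lintegral_indicator measurableSet_Ioc]
        rfl
    _ = ∫⁻ t, ∫⁻ s, A.indicator (fun p => g p.2) (s, t) :=
        lintegral_lintegral_swap (hg.comp_snd.indicator hA)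
    _ = ∫⁻ t, ENNReal.ofReal ε * g t := by
        refine lintegral_congr fun t => ?_
        change ∫⁻ s, {s | (s, t) ∈ A}.indicator (fun _ => g t) s = _
        rw [hslice, lintegral_indicator_const measurableSet_Ico, Real.volume_Ico,
          add_sub_cancel_left, mul_comm]
    _ = ENNReal.ofReal ε * ∫⁻ t, g t := lintegral_const_mul' _ _ ENNReal.ofReal_ne_top

section

variable {E : Type*} [NormedAddCommGroup E]

theorem norm_intervalIntegral_norm_sq_le (v : ℝ → E) (a b : ℝ) :
    ‖∫ s in a..b, ‖v s‖ ^ 2‖ ≤ (∫⁻ s in uIoc a b, ‖v s‖ₑ ^ 2).toReal := by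
  rw [intervalIntegral.norm_integral_eq_norm_integral_uIoc]
  refine (norm_integral_le_lintegral_norm _).trans_eq ?_
  simp_rw [ofReal_norm, enorm_pow, enorm_norm]

theorem eqOn_indicator_Icc_comp_add_sub (y : ℝ → E) {T ε : ℝ} (hε : 0 ≤ ε) :
    EqOn (fun t => (Icc 0 T).indicator y (t + ε) - (Icc 0 T).indicator y t)
      (fun t => y (t + ε) - y t) (Icc 0 (T - ε)) := by
  rintro t ⟨ht₀, htT⟩
  simp only [indicator_of_mem (show t + ε ∈ Icc 0 T from ⟨by linarith, by linarith⟩),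
    indicator_of_mem (show t ∈ Icc 0 T from ⟨ht₀, by linarith⟩)]

variable [NormedSpace ℝ E]

theorem enorm_inv_smul_setIntegral_sq_le {f : ℝ → E} (hf : AEStronglyMeasurable f) {ε : ℝ}
    (hε : 0 < ε) {s : ℝ} {I : Set ℝ} (hI : I ⊆ Ioc (s - ε) s) :
    ‖ε⁻¹ • ∫ t in I, f t‖ₑ ^ 2 ≤ (ENNReal.ofReal ε)⁻¹ * ∫⁻ t in Ioc (s - ε) s, ‖f t‖ₑ ^ 2 := by
  set e := ENNReal.ofReal ε
  have he : e ≠ 0 := (ENNReal.ofReal_pos.mpr hε).ne'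
  have hvol : volume I ≤ e := (measure_mono hI).trans_eq (by simp [e])
  calc ‖ε⁻¹ • ∫ t in I, f t‖ₑ ^ 2 = e⁻¹ ^ 2 * ‖∫ t in I, f t‖ₑ ^ 2 := by
        rw [enorm_smul, Real.enorm_eq_ofReal (inv_nonneg.mpr hε.le), ENNReal.ofReal_inv_of_pos hε,
          mul_pow]
    _ ≤ e⁻¹ ^ 2 * (e * ∫⁻ t in Ioc (s - ε) s, ‖f t‖ₑ ^ 2) := by
        gcongr
        refine (enorm_integral_sq_le hf.restrict).trans ?_
        rw [Measure.restrict_apply_univ]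
        gcongr
    _ = e⁻¹ * ∫⁻ t in Ioc (s - ε) s, ‖f t‖ₑ ^ 2 := by
        rw [sq, mul_assoc, ← mul_assoc _ e, ENNReal.inv_mul_cancel he ENNReal.ofReal_ne_top,
          one_mul]

theorem lintegral_enorm_inv_smul_setIntegral_sq_le {f : ℝ → E} (hf : AEStronglyMeasurable f)
    {ε : ℝ} (hε : 0 < ε) {I : ℝ → Set ℝ} (hI : ∀ s, I s ⊆ Ioc (s - ε) s) :
    ∫⁻ s, ‖ε⁻¹ • ∫ t in I s, f t‖ₑ ^ 2 ≤ ∫⁻ t, ‖f t‖ₑ ^ 2 := by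
  have he : ENNReal.ofReal ε ≠ 0 := (ENNReal.ofReal_pos.mpr hε).ne'
  calc ∫⁻ s, ‖ε⁻¹ • ∫ t in I s, f t‖ₑ ^ 2
      ≤ ∫⁻ s, (ENNReal.ofReal ε)⁻¹ * ∫⁻ t in Ioc (s - ε) s, ‖f t‖ₑ ^ 2 :=
        lintegral_mono fun s => enorm_inv_smul_setIntegral_sq_le hf hε (hI s)
    _ = ∫⁻ t, ‖f t‖ₑ ^ 2 := by
        rw [lintegral_const_mul' _ _ (ENNReal.inv_ne_top.mpr he),
          lintegral_setLIntegral_Ioc_sub (hf.enorm.pow_const 2), ← mul_assoc,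
          ENNReal.inv_mul_cancel he ENNReal.ofReal_ne_top, one_mul]

end

theorem Teps_tendsto_zero_general
    (H : Type*) [NormedAddCommGroup H] [InnerProductSpace ℝ H]
    (T T' : ℝ) (hT'T : T' < T)
    (y : ℝ → H) (hy : MemLp y 2 (volume.restrict (Set.Icc 0 T))) :
    Tendsto (fun ε : ℝ =>
        ∫ s in (0:ℝ)..T,
          ‖(1 / ε) • ∫ t in Set.Ioc (max (s - ε) 0) (min s T'), (y (t + ε) - y t)‖ ^ 2)
      (nhdsWithin 0 (Set.Ioi 0)) (nhds 0) := by
  set z := (Icc 0 T).indicator y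
  have hz : MemLp z 2 volume := (memLp_indicator_iff_restrict measurableSet_Icc).mpr hy
  have hshift : Tendsto (fun ε => ∫⁻ t, ‖z (t + ε) - z t‖ₑ ^ 2) (𝓝 0) (𝓝 0) := by
    simpa [eLpNorm_two_sq_eq_lintegral] using
      ENNReal.Tendsto.pow (n := 2) (hz.tendsto_eLpNorm_comp_add_right_sub ENNReal.ofNat_ne_top)
  have hbound : ∀ᶠ ε in 𝓝[>] 0,
      ∫⁻ s in uIoc 0 T, ‖(1 / ε) • ∫ t in Ioc (max (s - ε) 0) (min s T'), (y (t + ε) - y t)‖ₑ ^ 2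
        ≤ ∫⁻ t, ‖z (t + ε) - z t‖ₑ ^ 2 := by
    filter_upwards [Ioc_mem_nhdsGT (sub_pos.mpr hT'T)] with ε ⟨hε, hεT⟩
    have hsub (s : ℝ) : Ioc (max (s - ε) 0) (min s T') ⊆ Icc 0 (T - ε) := fun t ht =>
      ⟨(le_max_right _ _).trans ht.1.le, by linarith [ht.2.trans (min_le_right _ _)]⟩
    calc _ ≤ ∫⁻ s, ‖(1 / ε) • ∫ t in Ioc (max (s - ε) 0) (min s T'), (y (t + ε) - y t)‖ₑ ^ 2 :=
          setLIntegral_le_lintegral _ _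
      _ = ∫⁻ s, ‖ε⁻¹ • ∫ t in Ioc (max (s - ε) 0) (min s T'), (z (t + ε) - z t)‖ₑ ^ 2 := by
          refine lintegral_congr fun s => ?_
          rw [one_div, setIntegral_congr_fun measurableSet_Ioc
            ((eqOn_indicator_Icc_comp_add_sub y hε.le).mono (hsub s))]
      _ ≤ _ := lintegral_enorm_inv_smul_setIntegral_sq_le
          ((hz.1.comp_measurePreserving (measurePreserving_add_right _ ε)).sub hz.1) hε
          fun s => Ioc_subset_Ioc (le_max_left _ _) (min_le_left _ _)
  have hlim := tendsto_of_tendsto_of_tendsto_of_le_of_le' tendsto_const_nhds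
    (hshift.mono_left nhdsWithin_le_nhds) (.of_forall fun _ => zero_le) hbound
  simpa using squeeze_zero_norm (fun ε => norm_intervalIntegral_norm_sq_le _ 0 T)
    ((ENNReal.tendsto_toReal ENNReal.zero_ne_top).comp hlim)

/-- For every `y ∈ L²([0,T]; H)`, the functions
`T^ε(y)_s = (1/ε) ∫_{max(s−ε,0)}^{min(s,T')} (y(t+ε) − y(t)) dt` converge to `0` in
`L²([0,T]; H)` as `ε → 0⁺`. -/
theorem Teps_tendsto_zero
    (H : Type*) [NormedAddCommGroup H] [InnerProductSpace ℝ H] [CompleteSpace H]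
    [SecondCountableTopology H]
    (T T' : ℝ) (hT' : 0 ≤ T') (hT'T : T' < T)
    (y : ℝ → H) (hy : MemLp y 2 (volume.restrict (Set.Icc 0 T))) :
    Tendsto (fun ε : ℝ =>
        ∫ s in (0:ℝ)..T,
          ‖(1 / ε) • ∫ t in Set.Ioc (max (s - ε) 0) (min s T'), (y (t + ε) - y t)‖ ^ 2)
      (nhdsWithin 0 (Set.Ioi 0)) (nhds 0) :=
  Teps_tendsto_zero_general H T T' hT'T y hy
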